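/- arXiv:2211.03172 — 4 statements merged into one kernel-verified Lean document; each statement's English description precedes it below -/
import Mathlib

section
/- Let ψ be a weight on A and ψ_k the induced weight on M_k(A) given by summing ψ over the diagonal. Then M_{ψ_k} = M_k(M_ψ), i.e., the span of the finite-weight positive matrices equals the matrices with all entries in M_ψ. -/
/-!
Both inclusions rest on polarization: `star a * b` is a combination of the four elements
`star (a + c • b) * (a + c • b)` with `c ∈ {1, I, -1, -I}`, and by the parallelogram law these
have finite weight as soon as `star a * a` and `star b * b` do. The entries of `star y * y` are the
sums `∑ l, star (y l i) * y l j`, and `ψ_k (star y * y) < ∞` exactly when every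
`ψ (star (y l i) * y l i)` is finite; this gives `M_{ψ_k} ⊆ M_k(M_ψ)`. Conversely, for
`a = star c * c` of finite weight, `single i j a = star (single i i c) * single i j c`, and
polarization in `M_k(A)` puts it in `M_{ψ_k}`.
-/

open scoped ENNReal
open Complex Matrix

section Polarization

variable {R : Type*} [NonUnitalRing R] [StarRing R] [Module ℂ R] [StarModule ℂ R]
  [IsScalarTower ℂ R R] [SMulCommClass ℂ R R]

theorem star_mul_eq_polarization (a b : R) :
    star a * b = (4⁻¹ : ℂ) • (star (a + b) * (a + b) - star (a - b) * (a - b)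
      - I • (star (a + I • b) * (a + I • b)) + I • (star (a - I • b) * (a - I • b))) := by
  simp only [star_add, star_sub, star_smul, add_mul, mul_add, sub_mul, mul_sub, smul_mul_assoc,
    mul_smul_comm, smul_add, smul_sub, smul_smul, Complex.star_def, Complex.conj_I]
  match_scalars <;> ring_nf <;> simp only [I_sq] <;> ring

theorem star_mul_mem_span_of_forall_norm_eq_one {S : Set R} {a b : R}
    (h : ∀ c : ℂ, ‖c‖ = 1 → star (a + c • b) * (a + c • b) ∈ S) :
    star a * b ∈ Submodule.span ℂ S := by
  have hS : ∀ c : ℂ, ‖c‖ = 1 → star (a + c • b) * (a + c • b) ∈ Submodule.span ℂ S :=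
    fun c hc => Submodule.subset_span (h c hc)
  have h1 := hS 1 (by simp)
  have hm1 := hS (-1) (by simp)
  have hI := hS I (by simp)
  have hmI := hS (-I) (by simp)
  simp only [one_smul, neg_smul, ← sub_eq_add_neg] at h1 hm1 hI hmI
  rw [star_mul_eq_polarization]
  exact Submodule.smul_mem _ _ <| Submodule.add_mem _
    (Submodule.sub_mem _ (Submodule.sub_mem _ h1 hm1) (Submodule.smul_mem _ _ hI))
    (Submodule.smul_mem _ _ hmI)

end Polarization

theorem Matrix.star_mul_apply {n α : Type*} [Fintype n] [NonUnitalNonAssocSemiring α]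
    [StarRing α] (Y Z : Matrix n n α) (i j : n) :
    (star Y * Z) i j = ∑ l, star (Y l i) * Z l j := by
  simp [Matrix.mul_apply, Matrix.star_eq_conjTranspose]

section Weight

variable {A : Type*} [NonUnitalRing A] [StarRing A] [PartialOrder A] [StarOrderedRing A]
  {ψ : A → ℝ≥0∞} {n : Type*} [Fintype n]

theorem weight_mono (hadd : ∀ a b : A, 0 ≤ a → 0 ≤ b → ψ (a + b) = ψ a + ψ b)
    {p q : A} (hp : 0 ≤ p) (hpq : p ≤ q) : ψ p ≤ ψ q := by
  rw [← add_sub_cancel p q, hadd p (q - p) hp (sub_nonneg.2 hpq)]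
  exact le_self_add

theorem weight_sum (hadd : ∀ a b : A, 0 ≤ a → 0 ≤ b → ψ (a + b) = ψ a + ψ b)
    (h0 : ψ 0 = 0) {ι : Type*} (s : Finset ι) {f : ι → A} (hf : ∀ i ∈ s, 0 ≤ f i) :
    ψ (∑ i ∈ s, f i) = ∑ i ∈ s, ψ (f i) := by
  classical
  induction s using Finset.induction_on with
  | empty => simpa using h0
  | insert i s hi ih =>
    rw [Finset.sum_insert hi, Finset.sum_insert hi,
      hadd _ _ (hf i (s.mem_insert_self i)) (Finset.sum_nonneg fun j hj => hf j (by simp [hj])),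
      ih fun j hj => hf j (by simp [hj])]

theorem weight_diag_star_mul_self_lt_top_iff
    (hadd : ∀ a b : A, 0 ≤ a → 0 ≤ b → ψ (a + b) = ψ a + ψ b) (h0 : ψ 0 = 0)
    (Y : Matrix n n A) :
    ∑ i, ψ ((star Y * Y) i i) < ∞ ↔ ∀ l i, ψ (star (Y l i) * Y l i) < ∞ := by
  simp only [Matrix.star_mul_apply,
    weight_sum hadd h0 _ fun l _ => star_mul_self_nonneg (Y l _), ENNReal.sum_lt_top,
    Finset.mem_univ, true_implies]
  exact forall_comm

variable [Module ℂ A] [StarModule ℂ A] [IsScalarTower ℂ A A] [SMulCommClass ℂ A A]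

theorem weight_star_mul_self_add_smul_lt_top
    (hadd : ∀ a b : A, 0 ≤ a → 0 ≤ b → ψ (a + b) = ψ a + ψ b)
    {a b : A} (ha : ψ (star a * a) < ∞) (hb : ψ (star b * b) < ∞) {c : ℂ} (hc : ‖c‖ = 1) :
    ψ (star (a + c • b) * (a + c • b)) < ∞ := by
  have hcb : star (c • b) * (c • b) = star b * b := by
    rw [star_smul, smul_mul_smul_comm, Complex.star_def, Complex.conj_mul', hc]
    simp
  have hpar : star (a + c • b) * (a + c • b) + star (a - c • b) * (a - c • b)
      = (star a * a + star a * a) + (star b * b + star b * b) := by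
    rw [← hcb]
    simp only [star_add, star_sub, add_mul, mul_add, sub_mul, mul_sub]
    abel
  calc ψ (star (a + c • b) * (a + c • b))
      ≤ ψ ((star a * a + star a * a) + (star b * b + star b * b)) :=
        weight_mono hadd (star_mul_self_nonneg _)
          (hpar ▸ le_add_of_nonneg_right (star_mul_self_nonneg _))
    _ = (ψ (star a * a) + ψ (star a * a)) + (ψ (star b * b) + ψ (star b * b)) := by
        have haa := star_mul_self_nonneg a
        have hbb := star_mul_self_nonneg b
        rw [hadd _ _ (by positivity) (by positivity), hadd _ _ (by positivity) (by positivity),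
          hadd _ _ (by positivity) (by positivity)]
    _ < ∞ := by finiteness

theorem star_mul_mem_span_of_weight_lt_top
    (hadd : ∀ a b : A, 0 ≤ a → 0 ≤ b → ψ (a + b) = ψ a + ψ b)
    {a b : A} (ha : ψ (star a * a) < ∞) (hb : ψ (star b * b) < ∞) :
    star a * b ∈ Submodule.span ℂ {x : A | 0 ≤ x ∧ ψ x < ∞} :=
  star_mul_mem_span_of_forall_norm_eq_one fun _ hc =>
    ⟨star_mul_self_nonneg _, weight_star_mul_self_add_smul_lt_top hadd ha hb hc⟩

theorem star_mul_self_apply_mem_span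
    (hadd : ∀ a b : A, 0 ≤ a → 0 ≤ b → ψ (a + b) = ψ a + ψ b) (h0 : ψ 0 = 0)
    {Y : Matrix n n A} (hY : ∑ i, ψ ((star Y * Y) i i) < ∞) (i j : n) :
    (star Y * Y) i j ∈ Submodule.span ℂ {x : A | 0 ≤ x ∧ ψ x < ∞} := by
  have hentries := (weight_diag_star_mul_self_lt_top_iff hadd h0 Y).1 hY
  rw [Matrix.star_mul_apply]
  exact Submodule.sum_mem _ fun l _ =>
    star_mul_mem_span_of_weight_lt_top hadd (hentries l i) (hentries l j)

theorem single_star_mul_self_mem_span [DecidableEq n]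
    (hadd : ∀ a b : A, 0 ≤ a → 0 ≤ b → ψ (a + b) = ψ a + ψ b) (h0 : ψ 0 = 0)
    (i j : n) {c : A} (hc : ψ (star c * c) < ∞) :
    single i j (star c * c) ∈ Submodule.span ℂ {x : Matrix n n A |
      (∃ y : Matrix n n A, x = star y * y) ∧ ∑ i, ψ (x i i) < ∞} := by
  have hentries : ∀ j' l p : n, ψ (star (single i j' c l p) * single i j' c l p) < ∞ := by
    intro j' l p
    rw [single_apply]
    split_ifs <;> simp [h0, hc]
  rw [← single_mul_single_same (c := star c) i i j c, ← conjTranspose_single,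
    ← star_eq_conjTranspose]
  refine star_mul_mem_span_of_forall_norm_eq_one fun c' hc' => ⟨⟨_, rfl⟩, ?_⟩
  exact (weight_diag_star_mul_self_lt_top_iff hadd h0 _).2 fun l p =>
    weight_star_mul_self_add_smul_lt_top hadd (hentries i l p) (hentries j l p) hc'

end Weight

/-- For a weight ψ on a C*-algebra A and the induced weight
`ψ_k(x) = ∑ i, ψ (x i i)` on `M_k(A)`, one has `M_{ψ_k} = M_k(M_ψ)`: the span
of the positive matrices of finite weight is the set of matrices all of whose
entries lie in `M_ψ = Span M_ψ⁺`. -/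
theorem weight_matrix_Mpsi
    {A : Type*} [NonUnitalNormedRing A] [StarRing A] [CStarRing A]
    [NormedSpace ℂ A] [IsScalarTower ℂ A A] [SMulCommClass ℂ A A]
    [StarModule ℂ A] [PartialOrder A] [StarOrderedRing A] [CompleteSpace A]
    (ψ : A → ℝ≥0∞)
    (hadd : ∀ a b : A, 0 ≤ a → 0 ≤ b → ψ (a + b) = ψ a + ψ b)
    (hhom : ∀ (t : ℝ) (a : A), 0 ≤ t → 0 ≤ a → ψ (t • a) = ENNReal.ofReal t * ψ a)
    (k : ℕ) :
    (Submodule.span ℂ {x : Matrix (Fin k) (Fin k) A |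
        (∃ y : Matrix (Fin k) (Fin k) A, x = star y * y) ∧ (∑ i, ψ (x i i)) < ∞} :
      Set (Matrix (Fin k) (Fin k) A)) =
    {x : Matrix (Fin k) (Fin k) A |
        ∀ i j, x i j ∈ Submodule.span ℂ {a : A | 0 ≤ a ∧ ψ a < ∞}} := by
  have h0 : ψ 0 = 0 := by simpa using hhom 0 0 le_rfl le_rfl
  let _ : NonUnitalCStarAlgebra A := {}
  ext x
  constructor
  · intro hx i j
    refine (Submodule.span_le (p := (Submodule.span ℂ {a : A | 0 ≤ a ∧ ψ a < ∞}).comap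
      (entryLinearMap ℂ A i j))).2 ?_ hx
    rintro _ ⟨⟨y, rfl⟩, hy⟩
    exact star_mul_self_apply_mem_span hadd h0 hy i j
  · intro hx
    rw [SetLike.mem_coe, matrix_eq_sum_single x]
    refine Submodule.sum_mem _ fun i _ => Submodule.sum_mem _ fun j _ => ?_
    refine (Submodule.span_le (p := (Submodule.span ℂ {x : Matrix (Fin k) (Fin k) A |
      (∃ y : Matrix (Fin k) (Fin k) A, x = star y * y) ∧ ∑ i, ψ (x i i) < ∞}).comap
      (singleLinearMap ℂ i j))).2 ?_ (hx i j)
    rintro _ ⟨ha, hfa⟩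
    obtain ⟨c, rfl⟩ := CStarAlgebra.nonneg_iff_eq_star_mul_self.1 ha
    exact single_star_mul_self_mem_span hadd h0 i j hfa
end

section
/- Let ψ be a densely defined weight on A and define ψ̲(e) := inf{ψ_∞(f) : f a projection in some M_n(A) with f ∼ e} for projections e over A. If e, f are orthogonal projections in M_n(A) (i.e., ef = 0), then ψ̲(e+f) = ψ̲(e) + ψ̲(f). -/
/-!
If `v vᴴ = e`, `w wᴴ = f` and `e f = 0`, the row `[v w]` is a partial isometry from
`diag(vᴴ v, wᴴ w)` to `e + f`, and `ψ_∞` of a block diagonal matrix is the sum of the two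
values; this gives `ψ̲(e + f) ≤ ψ̲(e) + ψ̲(f)`. Conversely, if `v vᴴ = e + f` then `e v` and
`f v` implement `e ∼ (e v)ᴴ (e v)` and `f ∼ (f v)ᴴ (f v)`, and these two matrices with positive
diagonals add up to `vᴴ v`, so additivity of `ψ` on positive elements gives the reverse
inequality. The C*-identity enters only through `x xᴴ = 0 → x = 0`, which forces `e v = v`
whenever `v vᴴ = e`.
-/

open scoped ENNReal

section

variable {A : Type*} [NonUnitalNormedRing A] [StarRing A] [CStarRing A]
    [NormedSpace ℂ A] [IsScalarTower ℂ A A] [SMulCommClass ℂ A A]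
    [StarModule ℂ A] [PartialOrder A] [StarOrderedRing A] [CompleteSpace A]

/-- The diagonal extension `ψ_∞` of a weight: `ψ_k(x) = ∑ i, ψ (x i i)`. -/
noncomputable def psiDiag (ψ : A → ℝ≥0∞) {n : Type*} [Fintype n] (x : Matrix n n A) : ℝ≥0∞ :=
  ∑ i, ψ (x i i)

/-- A projection in a matrix algebra over `A`. -/
def IsProjection {n : Type*} [Fintype n] (e : Matrix n n A) : Prop :=
  e * e = e ∧ star e = e

/-- Murray–von Neumann equivalence of projections over `A` (of possibly
different sizes), via a rectangular partial isometry. -/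
def MvNEquiv {m n : Type*} [Fintype m] [Fintype n]
    (e : Matrix m m A) (f : Matrix n n A) : Prop :=
  ∃ v : Matrix m n A, v * v.conjTranspose = e ∧ v.conjTranspose * v = f

/-- `ψ̲(e)`: the infimum of `ψ_∞` over the Murray–von Neumann equivalence
class of `e` among projections in the matrix algebras `M_k(A)`, `k ∈ ℕ`. -/
noncomputable def psiLower (ψ : A → ℝ≥0∞) {m : Type*} [Fintype m]
    (e : Matrix m m A) : ℝ≥0∞ :=
  sInf {c : ℝ≥0∞ | ∃ (k : ℕ) (f : Matrix (Fin k) (Fin k) A),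
    IsProjection f ∧ MvNEquiv e f ∧ c = psiDiag ψ f}

end

open Matrix

namespace Matrix

theorem conjTranspose_mul_self_apply_self_nonneg {R m n : Type*} [NonUnitalSemiring R]
    [PartialOrder R] [StarRing R] [StarOrderedRing R] [Fintype m] (x : Matrix m n R) (i : n) :
    0 ≤ (xᴴ * x) i i :=
  Finset.sum_nonneg fun j _ => star_mul_self_nonneg (x j i)

theorem eq_zero_of_self_mul_conjTranspose_eq_zero {R m n : Type*} [NonUnitalNormedRing R]
    [StarRing R] [CStarRing R] [PartialOrder R] [StarOrderedRing R] [Fintype n]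
    {x : Matrix m n R} (h : x * xᴴ = 0) : x = 0 := by
  ext i j
  have hdiag : ∑ k, x i k * star (x i k) = 0 := congr_fun (congr_fun h i) i
  have hterms := (Fintype.sum_eq_zero_iff_of_nonneg fun k => mul_star_self_nonneg (x i k)).1 hdiag
  exact (CStarRing.mul_star_self_eq_zero_iff _).1 (congr_fun hterms j)

-- Mathlib states these two only over unital semirings.
theorem fromCols_mul_fromRows' {R m n₁ n₂ p : Type*} [NonUnitalNonAssocSemiring R] [Fintype n₁]
    [Fintype n₂] (x₁ : Matrix m n₁ R) (x₂ : Matrix m n₂ R) (y₁ : Matrix n₁ p R)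
    (y₂ : Matrix n₂ p R) : fromCols x₁ x₂ * fromRows y₁ y₂ = x₁ * y₁ + x₂ * y₂ := by
  ext
  simp [mul_apply]

theorem fromRows_mul_fromCols' {R m₁ m₂ n p₁ p₂ : Type*} [NonUnitalNonAssocSemiring R]
    [Fintype n] (x₁ : Matrix m₁ n R) (x₂ : Matrix m₂ n R) (y₁ : Matrix n p₁ R)
    (y₂ : Matrix n p₂ R) :
    fromRows x₁ x₂ * fromCols y₁ y₂ = fromBlocks (x₁ * y₁) (x₁ * y₂) (x₂ * y₁) (x₂ * y₂) := by
  ext (_ | _) (_ | _) <;> simp [mul_apply]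

end Matrix

section Projections

variable {A : Type*} [NonUnitalNormedRing A] [StarRing A] {m n p : Type*} [Fintype m]

namespace IsProjection

theorem conjTranspose_eq {e : Matrix m m A} (he : IsProjection e) : eᴴ = e := he.2

theorem reindex [Fintype n] [Fintype p] {g : Matrix n n A} (hg : IsProjection g) (σ : n ≃ p) :
    IsProjection (reindex σ σ g) :=
  ⟨by rw [reindex_apply, submatrix_mul_equiv, hg.1],
    by rw [star_eq_conjTranspose, conjTranspose_reindex, hg.conjTranspose_eq]⟩

theorem mul_eq_zero_symm {e f : Matrix m m A} (he : IsProjection e) (hf : IsProjection f)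
    (hef : e * f = 0) : f * e = 0 := by
  simpa [conjTranspose_mul, he.conjTranspose_eq, hf.conjTranspose_eq] using
    congrArg conjTranspose hef

theorem add {e f : Matrix m m A} (he : IsProjection e) (hf : IsProjection f) (hef : e * f = 0) :
    IsProjection (e + f) := by
  refine ⟨?_, by rw [star_add, he.2, hf.2]⟩
  rw [add_mul, mul_add, mul_add, he.1, hf.1, hef, he.mul_eq_zero_symm hf hef, add_zero, zero_add]

theorem conjTranspose_mul_mul_self {e : Matrix m m A} (he : IsProjection e) (v : Matrix m n A) :
    (e * v)ᴴ * (e * v) = vᴴ * e * v := by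
  rw [conjTranspose_mul, he.conjTranspose_eq, Matrix.mul_assoc, ← Matrix.mul_assoc e, he.1,
    Matrix.mul_assoc]

theorem mul_mul_conjTranspose_eq [Fintype n] {e : Matrix m m A} (he : IsProjection e)
    {v : Matrix m n A} (h : e * (v * vᴴ) = e) : e * v * (e * v)ᴴ = e := by
  rw [conjTranspose_mul, he.conjTranspose_eq, Matrix.mul_assoc, ← Matrix.mul_assoc v,
    ← Matrix.mul_assoc, h, he.1]

variable [Fintype n] [CStarRing A] [PartialOrder A] [StarOrderedRing A]

theorem mul_eq_of_mul_conjTranspose_eq {e : Matrix m m A} (he : IsProjection e)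
    {v : Matrix m n A} (hv : v * vᴴ = e) : e * v = v := by
  have h : (e * v - v) * (e * v - v)ᴴ = 0 := by
    have hev : e * v * vᴴ = e := by rw [Matrix.mul_assoc, hv, he.1]
    have hve : v * (vᴴ * e) = e := by rw [← Matrix.mul_assoc, hv, he.1]
    rw [conjTranspose_sub, conjTranspose_mul, he.conjTranspose_eq, Matrix.sub_mul, Matrix.mul_sub,
      Matrix.mul_sub, ← Matrix.mul_assoc (e * v), hev, he.1, hve, hv, sub_self]
  exact sub_eq_zero.1 (eq_zero_of_self_mul_conjTranspose_eq_zero h)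

theorem conjTranspose_mul_self {u : Matrix m n A} (hu : IsProjection (u * uᴴ)) :
    IsProjection (uᴴ * u) := by
  refine ⟨?_, by rw [star_eq_conjTranspose, conjTranspose_mul, conjTranspose_conjTranspose]⟩
  rw [Matrix.mul_assoc, ← Matrix.mul_assoc u, hu.mul_eq_of_mul_conjTranspose_eq rfl]

end IsProjection

namespace MvNEquiv

theorem reindex_right [Fintype n] [Fintype p] {e : Matrix m m A} {g : Matrix n n A}
    (h : MvNEquiv e g) (σ : n ≃ p) : MvNEquiv e (reindex σ σ g) := by
  obtain ⟨v, hv, hv'⟩ := h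
  refine ⟨reindex (Equiv.refl m) σ v, ?_, ?_⟩
  · rw [conjTranspose_reindex, reindex_apply, reindex_apply, submatrix_mul_equiv, hv]
    exact submatrix_id_id e
  · rw [conjTranspose_reindex, reindex_apply, reindex_apply, submatrix_mul_equiv, hv',
      reindex_apply]

variable [Fintype n] [CStarRing A] [PartialOrder A] [StarOrderedRing A]

theorem isProjection_right {e : Matrix m m A} {g : Matrix n n A} (he : IsProjection e)
    (h : MvNEquiv e g) : IsProjection g := by
  obtain ⟨v, rfl, rfl⟩ := h
  exact he.conjTranspose_mul_self

theorem add_fromBlocks {k l : Type*} [Fintype k] [Fintype l] {e f : Matrix m m A}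
    {e' : Matrix k k A} {f' : Matrix l l A} (he : IsProjection e) (hf : IsProjection f)
    (hef : e * f = 0) (h₁ : MvNEquiv e e') (h₂ : MvNEquiv f f') :
    MvNEquiv (e + f) (fromBlocks e' 0 0 f') := by
  obtain ⟨v, hv, hv'⟩ := h₁
  obtain ⟨w, hw, hw'⟩ := h₂
  have hvw : vᴴ * w = 0 := by
    rw [← he.mul_eq_of_mul_conjTranspose_eq hv, ← hf.mul_eq_of_mul_conjTranspose_eq hw,
      conjTranspose_mul, he.conjTranspose_eq, Matrix.mul_assoc, ← Matrix.mul_assoc e, hef,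
      Matrix.zero_mul, Matrix.mul_zero]
  have hwv : wᴴ * v = 0 := by
    simpa only [conjTranspose_mul, conjTranspose_conjTranspose, conjTranspose_zero] using
      congrArg conjTranspose hvw
  refine ⟨fromCols v w, ?_, ?_⟩
  · rw [conjTranspose_fromCols_eq_fromRows_conjTranspose, fromCols_mul_fromRows', hv, hw]
  · rw [conjTranspose_fromCols_eq_fromRows_conjTranspose, fromRows_mul_fromCols', hv', hw', hvw,
      hwv]

end MvNEquiv

end Projections

section Weights

variable {A : Type*} (ψ : A → ℝ≥0∞) {m n : Type*} [Fintype m] [Fintype n]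

theorem psiDiag_reindex (σ : m ≃ n) (g : Matrix m m A) :
    psiDiag ψ (reindex σ σ g) = psiDiag ψ g :=
  σ.symm.sum_comp fun i => ψ (g i i)

theorem psiDiag_fromBlocks_zero [Zero A] (x : Matrix m m A) (y : Matrix n n A) :
    psiDiag ψ (fromBlocks x 0 0 y) = psiDiag ψ x + psiDiag ψ y :=
  Fintype.sum_sum_type _

theorem psiDiag_add [Add A] [Zero A] [LE A]
    (hadd : ∀ a b : A, 0 ≤ a → 0 ≤ b → ψ (a + b) = ψ a + ψ b) {x y : Matrix m m A}
    (hx : ∀ i, 0 ≤ x i i) (hy : ∀ i, 0 ≤ y i i) :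
    psiDiag ψ (x + y) = psiDiag ψ x + psiDiag ψ y := by
  simp only [psiDiag, Matrix.add_apply, hadd _ _ (hx _) (hy _), Finset.sum_add_distrib]

variable [NonUnitalNormedRing A] [StarRing A]

theorem psiLower_le_psiDiag {e : Matrix m m A} {g : Matrix n n A} (hg : IsProjection g)
    (h : MvNEquiv e g) : psiLower ψ e ≤ psiDiag ψ g :=
  let σ := Fintype.equivFin n
  sInf_le ⟨_, reindex σ σ g, hg.reindex σ, h.reindex_right σ, (psiDiag_reindex ψ σ g).symm⟩

variable [CStarRing A] [PartialOrder A] [StarOrderedRing A] {e f : Matrix m m A}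

theorem psiLower_add_le_psiDiag_add_psiDiag {k l : Type*} [Fintype k] [Fintype l]
    {e' : Matrix k k A} {f' : Matrix l l A} (he : IsProjection e) (hf : IsProjection f)
    (hef : e * f = 0) (h₁ : MvNEquiv e e') (h₂ : MvNEquiv f f') :
    psiLower ψ (e + f) ≤ psiDiag ψ e' + psiDiag ψ f' := by
  have h := MvNEquiv.add_fromBlocks he hf hef h₁ h₂
  rw [← psiDiag_fromBlocks_zero]
  exact psiLower_le_psiDiag ψ (h.isProjection_right (he.add hf hef)) h

theorem psiLower_add_psiLower_le_psiDiag
    (hadd : ∀ a b : A, 0 ≤ a → 0 ≤ b → ψ (a + b) = ψ a + ψ b) {g : Matrix n n A}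
    (he : IsProjection e) (hf : IsProjection f) (hef : e * f = 0) (h : MvNEquiv (e + f) g) :
    psiLower ψ e + psiLower ψ f ≤ psiDiag ψ g := by
  obtain ⟨v, hv, rfl⟩ := h
  have hg : IsProjection (vᴴ * v) := MvNEquiv.isProjection_right (he.add hf hef) ⟨v, hv, rfl⟩
  have hve : e * v * (e * v)ᴴ = e :=
    he.mul_mul_conjTranspose_eq (by rw [hv, Matrix.mul_add, he.1, hef, add_zero])
  have hvf : f * v * (f * v)ᴴ = f :=
    hf.mul_mul_conjTranspose_eq (by rw [hv, Matrix.mul_add, he.mul_eq_zero_symm hf hef, hf.1,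
      zero_add])
  have hsplit : vᴴ * v = (e * v)ᴴ * (e * v) + (f * v)ᴴ * (f * v) :=
    calc vᴴ * v = vᴴ * v * (vᴴ * v) := hg.1.symm
      _ = vᴴ * (v * vᴴ) * v := by simp only [Matrix.mul_assoc]
      _ = vᴴ * e * v + vᴴ * f * v := by rw [hv, Matrix.mul_add, Matrix.add_mul]
      _ = _ := by rw [he.conjTranspose_mul_mul_self, hf.conjTranspose_mul_mul_self]
  rw [hsplit, psiDiag_add ψ hadd (conjTranspose_mul_self_apply_self_nonneg _)
    (conjTranspose_mul_self_apply_self_nonneg _)]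
  exact add_le_add
    (psiLower_le_psiDiag ψ (MvNEquiv.isProjection_right he ⟨_, hve, rfl⟩) ⟨_, hve, rfl⟩)
    (psiLower_le_psiDiag ψ (MvNEquiv.isProjection_right hf ⟨_, hvf, rfl⟩) ⟨_, hvf, rfl⟩)

end Weights

section

variable {A : Type*} [NonUnitalNormedRing A] [StarRing A] [CStarRing A]
    [NormedSpace ℂ A] [IsScalarTower ℂ A A] [SMulCommClass ℂ A A]
    [StarModule ℂ A] [PartialOrder A] [StarOrderedRing A] [CompleteSpace A]

theorem psiLower_add_of_orthogonal_general
    (ψ : A → ℝ≥0∞)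
    (hadd : ∀ a b : A, 0 ≤ a → 0 ≤ b → ψ (a + b) = ψ a + ψ b)
    (n : ℕ) (e f : Matrix (Fin n) (Fin n) A)
    (he : IsProjection e) (hf : IsProjection f) (hef : e * f = 0) :
    psiLower ψ (e + f) = psiLower ψ e + psiLower ψ f := by
  refine le_antisymm ?_ (le_sInf ?_)
  · conv_rhs => rw [psiLower, psiLower, sInf_eq_iInf, sInf_eq_iInf]
    refine ENNReal.le_iInf₂_add_iInf₂ ?_
    rintro _ ⟨k, e', -, he', rfl⟩ _ ⟨l, f', -, hf', rfl⟩
    exact psiLower_add_le_psiDiag_add_psiDiag ψ he hf hef he' hf'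
  · rintro _ ⟨k, g, -, hg, rfl⟩
    exact psiLower_add_psiLower_le_psiDiag ψ hadd he hf hef hg

/-- For a densely defined weight ψ on a C*-algebra A and
orthogonal projections `e, f ∈ M_n(A)`, `ψ̲(e + f) = ψ̲(e) + ψ̲(f)`. -/
theorem psiLower_add_of_orthogonal
    (ψ : A → ℝ≥0∞)
    (hadd : ∀ a b : A, 0 ≤ a → 0 ≤ b → ψ (a + b) = ψ a + ψ b)
    (hhom : ∀ (t : ℝ) (a : A), 0 ≤ t → 0 ≤ a → ψ (t • a) = ENNReal.ofReal t * ψ a)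
    (hdense : {a : A | 0 ≤ a} ⊆ closure {a : A | 0 ≤ a ∧ ψ a < ∞})
    (n : ℕ) (e f : Matrix (Fin n) (Fin n) A)
    (he : IsProjection e) (hf : IsProjection f) (hef : e * f = 0) :
    psiLower ψ (e + f) = psiLower ψ e + psiLower ψ f :=
  psiLower_add_of_orthogonal_general ψ hadd n e f he hf hef

end
end

section
/- Let τ be a densely defined trace on a C*-algebra A, let d, d' ∈ A⁺ with 0 ≤ d', 0 ≤ d ≤ 1 possibly, satisfying d'·√d = √d (i.e., d' acts as a unit on √d). If d' can be approximated within 1/2 by an element x ∈ A⁺ with τ(x) < ∞, then τ(d) < ∞. In particular, if (d_n) is a sequence in A with 0 ≤ d_n ≤ 1 and d_n d_{n+1} = d_n, then d_n a d_n ∈ M_τ for every a ∈ A⁺. -/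
open scoped ENNReal

/-!
Because `d'` acts as a unit on `s`, conjugating `d' - x` by `s` gives
`s⋆s - s⋆xs ≤ ‖x - d'‖ s⋆s`, so `s⋆s` is dominated by a multiple of `s⋆xs`. Writing `x = r²`,
the trace property turns `τ(s⋆xs)` into `τ(r ss⋆ r) ≤ ‖ss⋆‖ τ(x) < ∞`.
For the sequence, `d_{n+1}` acts as a unit on `d_n` and is approximated by finite-trace elements,
so `τ(d_n²) < ∞`, and `d_n a d_n ≤ ‖a‖ d_n²`.
-/

section Weight

variable {A : Type*} [AddCommGroup A] [PartialOrder A] [IsOrderedAddMonoid A]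
  {τ : A → ℝ≥0∞}

theorem weight_mono_s14 (hadd : ∀ a b : A, 0 ≤ a → 0 ≤ b → τ (a + b) = τ a + τ b)
    {a b : A} (ha : 0 ≤ a) (hab : a ≤ b) : τ a ≤ τ b := by
  have h := hadd a (b - a) ha (sub_nonneg.mpr hab)
  rw [add_sub_cancel] at h
  exact h ▸ le_self_add

theorem weight_lt_top_of_le_smul [Module ℝ A]
    (hadd : ∀ a b : A, 0 ≤ a → 0 ≤ b → τ (a + b) = τ a + τ b)
    (hhom : ∀ (t : ℝ) (a : A), 0 ≤ t → 0 ≤ a → τ (t • a) = ENNReal.ofReal t * τ a)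
    {a b : A} {t : ℝ} (ht : 0 ≤ t) (ha : 0 ≤ a) (hb : 0 ≤ b) (hab : a ≤ t • b)
    (hτb : τ b < ∞) : τ a < ∞ :=
  calc τ a ≤ τ (t • b) := weight_mono_s14 hadd ha hab
    _ = ENNReal.ofReal t * τ b := hhom t b ht hb
    _ < ∞ := ENNReal.mul_lt_top ENNReal.ofReal_lt_top hτb

end Weight

section CStarAlgebra

variable {A : Type*} [NonUnitalCStarAlgebra A] [PartialOrder A] [StarOrderedRing A]

theorem one_sub_smul_star_mul_le_of_mul_eq {s d' x : A} {ε : ℝ} (hd's : d' * s = s)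
    (hsa : IsSelfAdjoint (d' - x)) (hε : ‖x - d'‖ ≤ ε) :
    (1 - ε) • (star s * s) ≤ star s * x * s := by
  have hconj : star s * (d' - x) * s ≤ ε • (star s * s) :=
    (CStarAlgebra.star_left_conjugate_le_norm_smul hsa).trans <|
      smul_le_smul_of_nonneg_right (by rwa [norm_sub_rev]) (star_mul_self_nonneg s)
  rw [mul_sub, sub_mul, mul_assoc _ d', hd's] at hconj
  rw [sub_smul, one_smul]
  exact sub_le_comm.mp hconj

variable {τ : A → ℝ≥0∞}

theorem trace_mul_mul_star_lt_top (hadd : ∀ a b : A, 0 ≤ a → 0 ≤ b → τ (a + b) = τ a + τ b)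
    (hhom : ∀ (t : ℝ) (a : A), 0 ≤ t → 0 ≤ a → τ (t • a) = ENNReal.ofReal t * τ a)
    (htrace : ∀ a : A, τ (a * star a) = τ (star a * a))
    (a : A) {x : A} (hx : 0 ≤ x) (hτx : τ x < ∞) :
    τ (a * x * star a) < ∞ := by
  obtain ⟨r, hr, rfl⟩ : ∃ r : A, IsSelfAdjoint r ∧ r * r = x :=
    ⟨CFC.sqrt x, .of_nonneg (CFC.sqrt_nonneg x), CFC.sqrt_mul_sqrt_self x hx⟩
  have hconj : a * (r * r) * star a = (a * r) * star (a * r) := by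
    rw [star_mul, hr.star_eq]
    simp only [mul_assoc]
  have hle : star (a * r) * (a * r) ≤ ‖star a * a‖ • (r * r) := by
    rw [star_mul, hr.star_eq]
    simpa only [hr.star_eq, mul_assoc] using
      CStarAlgebra.star_left_conjugate_le_norm_smul (a := r) (IsSelfAdjoint.star_mul_self a)
  rw [hconj, htrace]
  exact weight_lt_top_of_le_smul hadd hhom (norm_nonneg _) (star_mul_self_nonneg _) hx hle hτx

theorem trace_star_mul_self_lt_top_of_approx_unit
    (hadd : ∀ a b : A, 0 ≤ a → 0 ≤ b → τ (a + b) = τ a + τ b)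
    (hhom : ∀ (t : ℝ) (a : A), 0 ≤ t → 0 ≤ a → τ (t • a) = ENNReal.ofReal t * τ a)
    (htrace : ∀ a : A, τ (a * star a) = τ (star a * a))
    {s d' x : A} {ε : ℝ} (hd' : IsSelfAdjoint d') (hd's : d' * s = s)
    (hx : 0 ≤ x) (hτx : τ x < ∞) (hxd' : ‖x - d'‖ ≤ ε) (hε : ε < 1) :
    τ (star s * s) < ∞ := by
  have hkey := one_sub_smul_star_mul_le_of_mul_eq hd's (hd'.sub (.of_nonneg hx)) hxd'
  have hε' : 0 < 1 - ε := sub_pos.mpr hε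
  refine weight_lt_top_of_le_smul hadd hhom (inv_nonneg.mpr hε'.le) (star_mul_self_nonneg s)
    (star_left_conjugate_nonneg hx s) ?_
    (by simpa using trace_mul_mul_star_lt_top hadd hhom htrace (star s) hx hτx)
  calc star s * s = (1 - ε)⁻¹ • (1 - ε) • (star s * s) := by rw [inv_smul_smul₀ hε'.ne']
    _ ≤ (1 - ε)⁻¹ • (star s * x * s) := smul_le_smul_of_nonneg_left hkey (inv_nonneg.mpr hε'.le)

theorem trace_star_mul_mul_lt_top (hadd : ∀ a b : A, 0 ≤ a → 0 ≤ b → τ (a + b) = τ a + τ b)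
    (hhom : ∀ (t : ℝ) (a : A), 0 ≤ t → 0 ≤ a → τ (t • a) = ENNReal.ofReal t * τ a)
    {e a : A} (ha : 0 ≤ a) (hτe : τ (star e * e) < ∞) :
    τ (star e * a * e) < ∞ :=
  weight_lt_top_of_le_smul hadd hhom (norm_nonneg a) (star_left_conjugate_nonneg ha e)
    (star_mul_self_nonneg e) (CStarAlgebra.star_left_conjugate_le_norm_smul (.of_nonneg ha)) hτe

end CStarAlgebra

/-- Let τ be a densely defined trace on a C*-algebra A.
(1) If `d, d' ≥ 0`, `s ≥ 0` with `s * s = d` and `d' * s = s` (`d'` acts as a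
unit on `√d = s`), and `d'` is within `1/2` of some `x ≥ 0` with `τ(x) < ∞`,
then `τ(d) < ∞`.
(2) In particular, if `(d_n)` satisfies `0 ≤ d_n`, `‖d_n‖ ≤ 1` and
`d_n d_{n+1} = d_n`, then `d_n a d_n ∈ M_τ` for every `a ∈ A⁺`. -/
theorem trace_finite_on_compressions
    {A : Type*} [NonUnitalNormedRing A] [StarRing A] [CStarRing A]
    [NormedSpace ℂ A] [IsScalarTower ℂ A A] [SMulCommClass ℂ A A]
    [StarModule ℂ A] [PartialOrder A] [StarOrderedRing A] [CompleteSpace A]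
    (τ : A → ℝ≥0∞)
    (hadd : ∀ a b : A, 0 ≤ a → 0 ≤ b → τ (a + b) = τ a + τ b)
    (hhom : ∀ (t : ℝ) (a : A), 0 ≤ t → 0 ≤ a → τ (t • a) = ENNReal.ofReal t * τ a)
    (htrace : ∀ a : A, τ (a * star a) = τ (star a * a))
    (hdense : {a : A | 0 ≤ a} ⊆ closure {a : A | 0 ≤ a ∧ τ a < ∞}) :
    (∀ d d' s : A, 0 ≤ d → 0 ≤ d' → 0 ≤ s → s * s = d → d' * s = s →
      (∃ x : A, 0 ≤ x ∧ τ x < ∞ ∧ ‖x - d'‖ ≤ 1 / 2) → τ d < ∞) ∧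
    (∀ d : ℕ → A, (∀ n, 0 ≤ d n ∧ ‖d n‖ ≤ 1) → (∀ n, d n * d (n + 1) = d n) →
      ∀ a : A, 0 ≤ a → ∀ n,
        d n * a * d n ∈ Submodule.span ℂ {b : A | 0 ≤ b ∧ τ b < ∞}) := by
  let _ : NonUnitalCStarAlgebra A := { }
  refine ⟨fun d d' s _ hd' hs hd hd's ⟨x, hx, hτx, hxd'⟩ ↦ ?_,
    fun d hd hstep a ha n ↦ Submodule.subset_span ?_⟩
  · rw [← hd]
    nth_rw 1 [← (IsSelfAdjoint.of_nonneg hs).star_eq]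
    exact trace_star_mul_self_lt_top_of_approx_unit hadd hhom htrace (.of_nonneg hd') hd's
      hx hτx hxd' one_half_lt_one
  · have hsa : ∀ m, IsSelfAdjoint (d m) := fun m ↦ .of_nonneg (hd m).1
    obtain ⟨x, ⟨hx, hτx⟩, hxd⟩ :=
      Metric.mem_closure_iff.mp (hdense (hd (n + 1)).1) (1 / 2) one_half_pos
    have hunit : d (n + 1) * d n = d n := by
      simpa [(hsa n).star_eq, (hsa (n + 1)).star_eq] using congrArg star (hstep n)
    have hsq := trace_star_mul_self_lt_top_of_approx_unit hadd hhom htrace (hsa (n + 1)) hunit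
      hx hτx (by rw [← dist_eq_norm, dist_comm]; exact hxd.le) one_half_lt_one
    have hpos := star_left_conjugate_nonneg ha (d n)
    have hfin := trace_star_mul_mul_lt_top hadd hhom ha hsq
    rw [(hsa n).star_eq] at hpos hfin
    exact ⟨hpos, hfin⟩
end

section
/- Let τ be a densely defined trace on a C*-algebra A and let e ∈ M_k(A) be a projection. Then e ∈ M_k(M_τ); in particular τ_k(e) < ∞. -/
/-!
Approximate `e` by a matrix `z` with entries in `M_τ`. Since `e⋆e = e`, the positive matrix
`x = z⋆z` is then close to `e`, say `‖e - x‖ ≤ 1/2`, and `e (e - x) e ≤ ‖e - x‖ e` gives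
`e ≤ 2 e x e`. As `τ_k` is a trace, `τ_k (e x e) = τ_k (z e z⋆) ≤ τ_k (z z⋆) = τ_k (z⋆z)`, which
is finite because `τ (a⋆a) < ∞` for every `a ∈ M_τ`. Finally `τ_k e = τ_k (e⋆e)` is the sum of
the `τ (e_{li}⋆ e_{li})`, so all of these are finite, and `e_{ij} = ∑ₗ e_{il} e_{jl}⋆` lies in
`M_τ` by polarization.
-/

open scoped ENNReal

structure IsWeight {A : Type*} [AddMonoid A] [PartialOrder A] [SMul ℝ A]
    (τ : A → ℝ≥0∞) : Prop where
  map_add : ∀ a b : A, 0 ≤ a → 0 ≤ b → τ (a + b) = τ a + τ b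
  map_smul : ∀ (t : ℝ) (a : A), 0 ≤ t → 0 ≤ a → τ (t • a) = ENNReal.ofReal t * τ a

-- The paper's `M_τ`.
def finiteSpan {A : Type*} [AddCommGroup A] [PartialOrder A] [Module ℂ A]
    (τ : A → ℝ≥0∞) : Submodule ℂ A :=
  Submodule.span ℂ {a | 0 ≤ a ∧ τ a < ∞}

theorem mul_star_eq_polarization {R : Type*} [NonUnitalRing R] [StarRing R] [Module ℂ R]
    [StarModule ℂ R] [IsScalarTower ℂ R R] [SMulCommClass ℂ R R] (x y : R) :
    x * star y = (4⁻¹ : ℂ) • ((x + y) * star (x + y) - (x - y) * star (x - y) +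
      Complex.I • ((x + Complex.I • y) * star (x + Complex.I • y)) -
      Complex.I • ((x - Complex.I • y) * star (x - Complex.I • y))) := by
  simp only [star_add, star_sub, star_smul, mul_add, add_mul, mul_sub, sub_mul,
    smul_add, smul_sub, smul_smul, mul_smul_comm, smul_mul_assoc,
    Complex.star_def, Complex.conj_I]
  match_scalars <;> norm_num [Complex.ext_iff]

theorem IsStarProjection.le_two_nsmul_mul_mul_of_norm_sub_le {B : Type*}
    [NonUnitalCStarAlgebra B] [PartialOrder B] [StarOrderedRing B] {p x : B}
    (hp : IsStarProjection p) (hx : IsSelfAdjoint x) (h : ‖p - x‖ ≤ 2⁻¹) :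
    p ≤ 2 • (p * x * p) := by
  have hconj := CStarAlgebra.star_left_conjugate_le_norm_smul (a := p)
    (hp.isSelfAdjoint.sub hx)
  rw [hp.isSelfAdjoint.star_eq, hp.isIdempotentElem.eq, mul_sub, sub_mul,
    hp.isIdempotentElem.eq, hp.isIdempotentElem.eq] at hconj
  have hhalf : p - p * x * p ≤ (2⁻¹ : ℝ) • p :=
    hconj.trans (smul_le_smul_of_nonneg_right h hp.nonneg)
  calc p = (2 : ℝ) • (p - (2⁻¹ : ℝ) • p) := by module
    _ ≤ (2 : ℝ) • (p * x * p) := smul_le_smul_of_nonneg_left (sub_le_comm.mp hhalf) zero_le_two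
    _ = 2 • (p * x * p) := Nat.cast_smul_eq_nsmul ℝ 2 _

namespace IsWeight

section OrderedModule

variable {A : Type*} [AddCommGroup A] [PartialOrder A] [Module ℝ A] {τ : A → ℝ≥0∞}

theorem map_zero (hτ : IsWeight τ) : τ 0 = 0 := by
  simpa using hτ.map_smul 0 0 le_rfl le_rfl

variable [IsOrderedAddMonoid A]

theorem mono (hτ : IsWeight τ) {a b : A} (ha : 0 ≤ a) (hab : a ≤ b) : τ a ≤ τ b := by
  rw [← add_sub_cancel a b, hτ.map_add a (b - a) ha (sub_nonneg.mpr hab)]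
  exact le_self_add

theorem map_sum (hτ : IsWeight τ) {ι : Type*} (s : Finset ι) {f : ι → A}
    (hf : ∀ i ∈ s, 0 ≤ f i) : τ (∑ i ∈ s, f i) = ∑ i ∈ s, τ (f i) := by
  classical
  induction s using Finset.induction_on with
  | empty => simpa using hτ.map_zero
  | insert i s hi ih =>
    rw [Finset.sum_insert hi, Finset.sum_insert hi,
      hτ.map_add _ _ (hf i (s.mem_insert_self i))
        (Finset.sum_nonneg fun j hj => hf j (Finset.mem_insert_of_mem hj)),
      ih fun j hj => hf j (Finset.mem_insert_of_mem hj)]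

theorem lt_top_of_le_nsmul (hτ : IsWeight τ) (m : ℕ) {a b : A} (ha : 0 ≤ a) (hb : 0 ≤ b)
    (hab : a ≤ m • b) (hfin : τ b < ∞) : τ a < ∞ := by
  rw [← Nat.cast_smul_eq_nsmul ℝ] at hab
  refine (hτ.mono ha hab).trans_lt ?_
  rw [hτ.map_smul _ _ m.cast_nonneg hb]
  exact ENNReal.mul_lt_top ENNReal.ofReal_lt_top hfin

end OrderedModule

section CStarAlgebra

variable {A : Type*} [NonUnitalCStarAlgebra A] [PartialOrder A] [StarOrderedRing A]
  {τ : A → ℝ≥0∞}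

theorem mul_self_lt_top (hτ : IsWeight τ) {q : A} (hq : 0 ≤ q) (hfin : τ q < ∞) :
    τ (q * q) < ∞ := by
  set r := CFC.sqrt q
  have hrq : r * r = q := CFC.sqrt_mul_sqrt_self q hq
  have hconj := CStarAlgebra.star_left_conjugate_le_norm_smul (a := r) (b := q) hq.isSelfAdjoint
  rw [(CFC.sqrt_nonneg q).isSelfAdjoint.star_eq, hrq] at hconj
  have hle : q * q ≤ ‖q‖ • q := by
    calc q * q = r * q * r := by rw [← hrq]; noncomm_ring
      _ ≤ ‖q‖ • q := hconj
  calc τ (q * q) ≤ τ (‖q‖ • q) := hτ.mono hq.isSelfAdjoint.mul_self_nonneg hle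
    _ = ENNReal.ofReal ‖q‖ * τ q := hτ.map_smul _ _ (norm_nonneg q) hq
    _ < ∞ := ENNReal.mul_lt_top ENNReal.ofReal_lt_top hfin

theorem star_mul_self_add_lt_top (hτ : IsWeight τ) {a b : A} (ha : τ (star a * a) < ∞)
    (hb : τ (star b * b) < ∞) : τ (star (a + b) * (a + b)) < ∞ := by
  have hpar : star (a + b) * (a + b) + star (a - b) * (a - b) =
      (star a * a + star b * b) + (star a * a + star b * b) := by
    simp only [star_add, star_sub, mul_add, add_mul, mul_sub, sub_mul]
    abel
  have hsum : τ ((star a * a + star b * b) + (star a * a + star b * b)) < ∞ := by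
    have h0 := add_nonneg (star_mul_self_nonneg a) (star_mul_self_nonneg b)
    rw [hτ.map_add _ _ h0 h0, hτ.map_add _ _ (star_mul_self_nonneg a) (star_mul_self_nonneg b)]
    exact ENNReal.add_lt_top.mpr ⟨ENNReal.add_lt_top.mpr ⟨ha, hb⟩,
      ENNReal.add_lt_top.mpr ⟨ha, hb⟩⟩
  refine (hτ.mono (star_mul_self_nonneg _) ?_).trans_lt (hpar ▸ hsum)
  exact le_add_of_nonneg_right (star_mul_self_nonneg _)

theorem star_mul_self_smul_lt_top (hτ : IsWeight τ) (c : ℂ) {a : A}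
    (ha : τ (star a * a) < ∞) : τ (star (c • a) * (c • a)) < ∞ := by
  have h : star (c • a) * (c • a) = Complex.normSq c • (star a * a) := by
    rw [star_smul, smul_mul_assoc, mul_smul_comm, smul_smul, Complex.star_def,
      mul_comm ((starRingEnd ℂ) c) c, Complex.mul_conj, Complex.coe_smul]
  rw [h, hτ.map_smul _ _ (Complex.normSq_nonneg c) (star_mul_self_nonneg a)]
  exact ENNReal.mul_lt_top ENNReal.ofReal_lt_top ha

def starMulSelfFinite (hτ : IsWeight τ) : Submodule ℂ A where
  carrier := {a | τ (star a * a) < ∞}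
  add_mem' := hτ.star_mul_self_add_lt_top
  zero_mem' := by simp [hτ.map_zero]
  smul_mem' := hτ.star_mul_self_smul_lt_top

theorem finiteSpan_le_starMulSelfFinite (hτ : IsWeight τ) :
    finiteSpan τ ≤ hτ.starMulSelfFinite := by
  refine Submodule.span_le.mpr fun q ⟨hq, hfin⟩ => ?_
  change τ (star q * q) < ∞
  rw [hq.isSelfAdjoint.star_eq]
  exact hτ.mul_self_lt_top hq hfin

theorem mul_star_mem_finiteSpan (hτ : IsWeight τ)
    (htrace : ∀ a : A, τ (a * star a) = τ (star a * a)) {x y : A}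
    (hx : x ∈ hτ.starMulSelfFinite) (hy : y ∈ hτ.starMulSelfFinite) :
    x * star y ∈ finiteSpan τ := by
  have hsq : ∀ d ∈ hτ.starMulSelfFinite, d * star d ∈ finiteSpan τ := fun d hd =>
    Submodule.subset_span ⟨mul_star_self_nonneg d, (htrace d).trans_lt hd⟩
  have hIy := hτ.starMulSelfFinite.smul_mem Complex.I hy
  rw [mul_star_eq_polarization]
  refine Submodule.smul_mem _ _ (Submodule.sub_mem _ (Submodule.add_mem _
    (Submodule.sub_mem _ ?_ ?_) (Submodule.smul_mem _ _ ?_)) (Submodule.smul_mem _ _ ?_))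
  · exact hsq _ (Submodule.add_mem _ hx hy)
  · exact hsq _ (Submodule.sub_mem _ hx hy)
  · exact hsq _ (Submodule.add_mem _ hx hIy)
  · exact hsq _ (Submodule.sub_mem _ hx hIy)

end CStarAlgebra

end IsWeight

theorem dense_finiteSpan {A : Type*} [NonUnitalCStarAlgebra A] [PartialOrder A]
    [StarOrderedRing A] {τ : A → ℝ≥0∞}
    (hdense : {a : A | 0 ≤ a} ⊆ closure {a | 0 ≤ a ∧ τ a < ∞}) :
    Dense (finiteSpan τ : Set A) := by
  rw [Submodule.dense_iff_topologicalClosure_eq_top, eq_top_iff,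
    ← CStarAlgebra.span_nonneg (A := A), Submodule.span_le, Submodule.topologicalClosure_coe]
  exact fun q hq => closure_mono Submodule.subset_span (hdense hq)

namespace CStarMatrix

-- The paper's `τ_k`; `CStarMatrix n n A` is `M_n(A)` with its C⋆-norm and order.
noncomputable def inducedTrace {A : Type*} {n : Type*} [Fintype n] (τ : A → ℝ≥0∞)
    (M : CStarMatrix n n A) : ℝ≥0∞ :=
  ∑ i, τ (M i i)

variable {A : Type*} [NonUnitalCStarAlgebra A] {n : Type*} [Fintype n]

theorem star_mul_self_apply (v : CStarMatrix n n A) (i j : n) :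
    (star v * v) i j = ∑ l, star (v l i) * v l j := by
  simp [mul_apply, star_apply]

variable [PartialOrder A] [StarOrderedRing A] {τ : A → ℝ≥0∞}

theorem exists_forall_mem_norm_star_mul_self_sub_lt {S : Set A} (hS : Dense S)
    (M : CStarMatrix n n A) {ε : ℝ} (hε : 0 < ε) :
    ∃ z : CStarMatrix n n A, (∀ i j, z i j ∈ S) ∧ ‖star M * M - star z * z‖ < ε := by
  have hD : Dense {z : CStarMatrix n n A | ∀ i j, z i j ∈ S} := by
    have := dense_pi (α := fun _ : n => n → A) Set.univ
      fun _ _ => dense_pi (α := fun _ : n => A) Set.univ fun _ _ => hS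
    simp only [Set.pi, Set.mem_univ, true_implies] at this
    exact this
  have hU : IsOpen {z : CStarMatrix n n A | ‖star M * M - star z * z‖ < ε} :=
    isOpen_lt (by fun_prop) continuous_const
  obtain ⟨z, hzS, hzU⟩ := hD.exists_mem_open hU ⟨M, by simpa using hε⟩
  exact ⟨z, hzS, hzU⟩

theorem diag_nonneg {M : CStarMatrix n n A} (hM : 0 ≤ M) (i : n) : 0 ≤ M i i := by
  have hclosure : ∀ x ∈ AddSubmonoid.closure (Set.range fun v : CStarMatrix n n A => star v * v),
      0 ≤ x i i := by
    intro x hx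
    induction hx using AddSubmonoid.closure_induction with
    | mem x hx =>
      obtain ⟨v, rfl⟩ := hx
      change 0 ≤ (star v * v) i i
      rw [star_mul_self_apply]
      exact Finset.sum_nonneg fun l _ => star_mul_self_nonneg _
    | zero => exact le_rfl
    | add x y _ _ hx hy => exact add_nonneg hx hy
  exact hclosure M (StarOrderedRing.nonneg_iff.mp hM)

theorem _root_.IsWeight.inducedTrace (hτ : IsWeight τ) :
    IsWeight (inducedTrace τ : CStarMatrix n n A → ℝ≥0∞) where
  map_add M N hM hN := by
    simp only [CStarMatrix.inducedTrace, add_apply,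
      hτ.map_add _ _ (diag_nonneg hM _) (diag_nonneg hN _), Finset.sum_add_distrib]
  map_smul t M ht hM := by
    simp only [CStarMatrix.inducedTrace, smul_apply, hτ.map_smul _ _ ht (diag_nonneg hM _),
      Finset.mul_sum]

theorem inducedTrace_star_mul_self (hτ : IsWeight τ) (v : CStarMatrix n n A) :
    inducedTrace τ (star v * v) = ∑ i, ∑ l, τ (star (v l i) * v l i) := by
  simp only [inducedTrace, star_mul_self_apply,
    hτ.map_sum _ fun _ _ => star_mul_self_nonneg _]

theorem inducedTrace_mul_star_self (hτ : IsWeight τ)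
    (htrace : ∀ a : A, τ (a * star a) = τ (star a * a)) (v : CStarMatrix n n A) :
    inducedTrace τ (v * star v) = inducedTrace τ (star v * v) := by
  have h := inducedTrace_star_mul_self hτ (star v)
  rw [star_star] at h
  rw [h, inducedTrace_star_mul_self hτ, Finset.sum_comm]
  simp only [star_apply, star_star, htrace]

theorem inducedTrace_star_mul_self_lt_top_iff (hτ : IsWeight τ) (v : CStarMatrix n n A) :
    inducedTrace τ (star v * v) < ∞ ↔ ∀ i j, v i j ∈ hτ.starMulSelfFinite := by
  simp only [inducedTrace_star_mul_self hτ, ENNReal.sum_lt_top, Finset.mem_univ, true_implies]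
  exact forall_comm

theorem inducedTrace_conj_star_mul_self_le (hτ : IsWeight τ)
    (htrace : ∀ a : A, τ (a * star a) = τ (star a * a)) {p : CStarMatrix n n A}
    (hp : IsStarProjection p) (z : CStarMatrix n n A) :
    inducedTrace τ (p * (star z * z) * p) ≤ inducedTrace τ (star z * z) := by
  have hps := hp.isSelfAdjoint.star_eq
  have hconj : p * (star z * z) * p = star (z * p) * (z * p) := by
    rw [star_mul, hps]; noncomm_ring
  have hsplit : z * star z = (z * p) * star (z * p) + (z - z * p) * star (z - z * p) := by
    have h : (z * p) * star (z * p) + (z - z * p) * star (z - z * p) =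
        z * star z + ((z * (p * p) * star z - z * p * star z) +
          (z * (p * p) * star z - z * p * star z)) := by
      rw [star_sub, star_mul, hps]; noncomm_ring
    rw [h, hp.isIdempotentElem.eq, sub_self, add_zero, add_zero]
  rw [hconj, ← inducedTrace_mul_star_self hτ htrace, ← inducedTrace_mul_star_self hτ htrace z]
  refine hτ.inducedTrace.mono (mul_star_self_nonneg _) ?_
  rw [hsplit]
  exact le_add_of_nonneg_right (mul_star_self_nonneg _)

end CStarMatrix

theorem IsStarProjection.apply_mem_finiteSpan {A : Type*} [NonUnitalCStarAlgebra A]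
    [PartialOrder A] [StarOrderedRing A] {τ : A → ℝ≥0∞} (hτ : IsWeight τ)
    (htrace : ∀ a : A, τ (a * star a) = τ (star a * a)) {n : Type*} [Fintype n]
    {p : CStarMatrix n n A} (hp : IsStarProjection p)
    (hfin : CStarMatrix.inducedTrace τ p < ∞) (i j : n) : p i j ∈ finiteSpan τ := by
  have hN : ∀ i j, p i j ∈ hτ.starMulSelfFinite := by
    rw [← CStarMatrix.inducedTrace_star_mul_self_lt_top_iff hτ, hp.isSelfAdjoint.star_eq,
      hp.isIdempotentElem.eq]
    exact hfin
  have hpij : p i j = ∑ l, p i l * star (p j l) := by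
    calc p i j = (p * star p) i j := by rw [hp.isSelfAdjoint.star_eq, hp.isIdempotentElem.eq]
      _ = ∑ l, p i l * star (p j l) := by simp [CStarMatrix.mul_apply, CStarMatrix.star_apply]
  rw [hpij]
  exact Submodule.sum_mem _ fun l _ => hτ.mul_star_mem_finiteSpan htrace (hN i l) (hN j l)

/-- Let τ be a densely defined trace on a C*-algebra A and let
`e ∈ M_k(A)` be a projection.  Then `e ∈ M_k(M_τ)`, i.e. every entry of `e`
lies in `M_τ = Span {a ∈ A⁺ : τ a < ∞}`; in particular `τ_k(e) < ∞`. -/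
theorem projection_entries_in_trace_ideal
    {A : Type*} [NonUnitalNormedRing A] [StarRing A] [CStarRing A]
    [NormedSpace ℂ A] [IsScalarTower ℂ A A] [SMulCommClass ℂ A A]
    [StarModule ℂ A] [PartialOrder A] [StarOrderedRing A] [CompleteSpace A]
    (τ : A → ℝ≥0∞)
    (hadd : ∀ a b : A, 0 ≤ a → 0 ≤ b → τ (a + b) = τ a + τ b)
    (hhom : ∀ (t : ℝ) (a : A), 0 ≤ t → 0 ≤ a → τ (t • a) = ENNReal.ofReal t * τ a)
    (htrace : ∀ a : A, τ (a * star a) = τ (star a * a))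
    (hdense : {a : A | 0 ≤ a} ⊆ closure {a : A | 0 ≤ a ∧ τ a < ∞})
    (k : ℕ) (e : Matrix (Fin k) (Fin k) A)
    (he : e * e = e ∧ star e = e) :
    (∀ i j, e i j ∈ Submodule.span ℂ {a : A | 0 ≤ a ∧ τ a < ∞}) ∧
      (∑ i, τ (e i i)) < ∞ := by
  let _ : NonUnitalCStarAlgebra A :=
    { ‹NonUnitalNormedRing A›, ‹StarRing A›, ‹CStarRing A›, ‹NormedSpace ℂ A›,
      ‹IsScalarTower ℂ A A›, ‹SMulCommClass ℂ A A›, ‹StarModule ℂ A›, ‹CompleteSpace A› with }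
  have hτ : IsWeight τ := ⟨hadd, hhom⟩
  let p : CStarMatrix (Fin k) (Fin k) A := CStarMatrix.ofMatrix e
  have hp : IsStarProjection p := ⟨he.1, he.2⟩
  obtain ⟨z, hzS, hz⟩ := CStarMatrix.exists_forall_mem_norm_star_mul_self_sub_lt
    (dense_finiteSpan hdense) p (ε := 2⁻¹) (by norm_num)
  rw [hp.isSelfAdjoint.star_eq, hp.isIdempotentElem.eq] at hz
  have hx : CStarMatrix.inducedTrace τ (star z * z) < ∞ :=
    (CStarMatrix.inducedTrace_star_mul_self_lt_top_iff hτ z).mpr fun i j =>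
      hτ.finiteSpan_le_starMulSelfFinite (hzS i j)
  have hfin : CStarMatrix.inducedTrace τ p < ∞ :=
    hτ.inducedTrace.lt_top_of_le_nsmul 2 hp.nonneg
      (hp.isSelfAdjoint.conjugate_nonneg (star_mul_self_nonneg z))
      (hp.le_two_nsmul_mul_mul_of_norm_sub_le (.star_mul_self z) hz.le)
      ((CStarMatrix.inducedTrace_conj_star_mul_self_le hτ htrace hp z).trans_lt hx)
  exact ⟨hp.apply_mem_finiteSpan hτ htrace hfin, hfin⟩
end
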